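/- arXiv:1108.4500 — 2 statements merged into one kernel-verified Lean document; each statement's English description precedes it below -/
import Mathlib

section
/- Let A be a finite nonempty set of nonnegative integers with 0 ∈ A, max(A) = a_m > 0, and gcd of the elements of A equal to 1. Then there exists N and a constant C ≥ 0 such that for all k ≥ N, |kA| = k·a_m + 1 - C; in other words, the sequence k·a_m + 1 - |kA| is eventually constant. -/
open Finset Pointwise

/-- `itSum k A` is the k-fold sumset A + A + ⋯ + A (with `itSum 0 A = {0}`). -/
def itSum : ℕ → Finset ℤ → Finset ℤ
  | 0, _ => {0}
  | n+1, A => A + itSum n A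

/-- `gDiff s d A = sA - dA`. -/
def gDiff (s d : ℕ) (A : Finset ℤ) : Finset ℤ := itSum s A - itSum d A

/-!
Let `a = max A`. Since the gcd is `1`, every large integer is a sum of elements of `A`
(Frobenius); adding copies of `a` to representatives of the residues mod `a` shows that `kA`
contains the whole middle interval `[K, ka - K]` for some `K` independent of `k`. Since `0 ∈ A`,
the sets `kA` increase with `k`, so their traces on the bottom window `[0, K)` stabilize. The top
window `(ka - K, ka]` of `kA` is the mirror image of the bottom window of `k(a - A)`, which
stabilizes for the same reason. Hence the number of elements of `[0, ka]` missing from `kA` is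
eventually constant.
-/

theorem itSum_eq_nsmul (k : ℕ) (A : Finset ℤ) : itSum k A = k • A := by
  induction k with
  | zero => rfl
  | succ k ih => rw [itSum, ih, succ_nsmul']

section AddMonoid

variable {α : Type*} [AddMonoid α] [DecidableEq α] {A : Finset α}

theorem exists_subset_nsmul (h0 : 0 ∈ A) (E : Finset α) (hE : ∀ x ∈ E, ∃ k : ℕ, x ∈ k • A) :
    ∃ T : ℕ, E ⊆ T • A := by
  choose! k hk using hE
  exact ⟨E.sup k, fun x hx => nsmul_subset_nsmul_right h0 (le_sup hx) (hk x hx)⟩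

theorem exists_sdiff_nsmul_eq (h0 : 0 ∈ A) (I : Finset α) :
    ∃ N : ℕ, ∀ k ≥ N, I \ k • A = I \ N • A := by
  classical
  obtain ⟨N, hN⟩ := exists_subset_nsmul h0 {x ∈ I | ∃ k : ℕ, x ∈ k • A}
    fun x hx => (mem_filter.1 hx).2
  refine ⟨N, fun k hk => subset_antisymm
    (sdiff_subset_sdiff subset_rfl (nsmul_subset_nsmul_right h0 hk)) fun x hx => ?_⟩
  obtain ⟨hxI, hxN⟩ := mem_sdiff.1 hx
  exact mem_sdiff.2 ⟨hxI, fun hxk => hxN (hN (mem_filter.2 ⟨hxI, k, hxk⟩))⟩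

end AddMonoid

theorem nsmul_subset_Icc {α : Type*} [AddCommMonoid α] [PartialOrder α] [IsOrderedAddMonoid α]
    [LocallyFiniteOrder α] [DecidableEq α] {A : Finset α} {a : α} (hA : A ⊆ Icc 0 a) (k : ℕ) :
    k • A ⊆ Icc 0 (k • a) := by
  induction k with
  | zero => simp [← singleton_zero]
  | succ k ih =>
    rw [succ_nsmul, succ_nsmul]
    simpa using (add_subset_add ih hA).trans (Icc_add_Icc_subset _ _ _ _)

theorem nsmul_image_const_sub {α : Type*} [AddCommGroup α] [DecidableEq α] (A : Finset α) (a : α)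
    (k : ℕ) : k • A.image (a - ·) = (k • A).image (k • a - ·) := by
  induction k with
  | zero => simp [← singleton_zero]
  | succ k ih =>
    rw [succ_nsmul (A.image _), succ_nsmul A, ih, succ_nsmul a]
    ext z
    simp only [mem_add, mem_image]
    constructor
    · rintro ⟨_, ⟨u, hu, rfl⟩, _, ⟨v, hv, rfl⟩, rfl⟩
      exact ⟨u + v, ⟨u, hu, v, hv, rfl⟩, by abel⟩
    · rintro ⟨_, ⟨u, hu, v, hv, rfl⟩, rfl⟩
      exact ⟨k • a - u, ⟨u, hu, rfl⟩, a - v, ⟨v, hv, rfl⟩, by abel⟩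

section Int

variable {A : Finset ℤ} {a : ℤ}

theorem exists_forall_ge_exists_mem_nsmul (hA : ∀ x ∈ A, 0 ≤ x) (hgcd : A.gcd id = 1) :
    ∃ F : ℕ, ∀ m ≥ F, ∃ k : ℕ, (m : ℤ) ∈ k • A := by
  set S : Set ℕ := {n | (n : ℤ) ∈ A}
  have hS : Nat.setGcd S = 1 := by
    refine Nat.dvd_one.1 (Int.natCast_dvd_natCast.1 ?_)
    rw [Nat.cast_one, ← hgcd]
    refine dvd_gcd fun x hx => ?_
    have hx' : x.toNat ∈ S := by simpa [S, Int.toNat_of_nonneg (hA x hx)] using hx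
    simpa [Int.toNat_of_nonneg (hA x hx)] using
      Int.natCast_dvd_natCast.2 (Nat.setGcd_dvd_of_mem hx')
  have hclosure : ∀ m ∈ AddSubmonoid.closure S, ∃ k : ℕ, (m : ℤ) ∈ k • A := by
    intro m hm
    induction hm using AddSubmonoid.closure_induction with
    | mem x hx => exact ⟨1, by rwa [one_nsmul]⟩
    | zero => exact ⟨0, by simp⟩
    | add x y _ _ hx hy =>
      obtain ⟨k, hk⟩ := hx
      obtain ⟨l, hl⟩ := hy
      exact ⟨k + l, by rw [add_nsmul]; exact_mod_cast add_mem_add hk hl⟩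
  obtain ⟨F, hF⟩ := Nat.exists_mem_closure_of_ge S
  exact ⟨F, fun m hm => hclosure m (hF m hm (hS ▸ one_dvd m))⟩

theorem exists_Icc_subset_nsmul (hA : ∀ x ∈ A, 0 ≤ x) (h0 : 0 ∈ A) (ha : a ∈ A) (hapos : 0 < a)
    (hgcd : A.gcd id = 1) : ∃ K : ℤ, ∀ k : ℕ, Icc K (k * a - K) ⊆ k • A := by
  obtain ⟨F, hF⟩ := exists_forall_ge_exists_mem_nsmul hA hgcd
  obtain ⟨T, hT⟩ := exists_subset_nsmul h0 (Ico (F : ℤ) (F + a)) fun x hx => by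
    obtain ⟨hFx, -⟩ := mem_Ico.1 hx
    lift x to ℕ using (by omega)
    exact hF x (by exact_mod_cast hFx)
  refine ⟨F + T * a, fun k n hn => ?_⟩
  obtain ⟨hn1, hn2⟩ := mem_Icc.1 hn
  -- `n = (F + r) + j * a`, where `F + r ∈ [F, F + a)` lies in `T • A`
  set j := (n - F) / a
  have hdiv := Int.emod_add_mul_ediv (n - F) a
  have hr0 := Int.emod_nonneg (n - F) hapos.ne'
  have hr : F + (n - F) % a ∈ Ico (F : ℤ) (F + a) :=
    mem_Ico.2 ⟨by linarith, by linarith [Int.emod_lt_of_pos (n - F) hapos]⟩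
  have hj : 0 ≤ j := Int.ediv_nonneg (by nlinarith) hapos.le
  have hjk : T + j.toNat ≤ k := by
    have := le_of_mul_le_mul_right (by nlinarith : j * a ≤ (k - T) * a) hapos
    omega
  have hn : n ∈ (T + j.toNat) • A := by
    rw [add_nsmul]
    convert add_mem_add (hT hr) (nsmul_mem_nsmul (n := j.toNat) ha) using 1
    rw [nsmul_eq_mul, Int.toNat_of_nonneg hj]
    linarith
  exact nsmul_subset_nsmul_right h0 hjk hn

theorem Ioc_sdiff_nsmul_eq_image (A : Finset ℤ) (a K : ℤ) (k : ℕ) :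
    Ioc (k * a - K) (k * a) \ k • A = (Ico 0 K \ k • A.image (a - ·)).image (k * a - ·) := by
  have hIco : (Ico 0 K).image (k * a - ·) = Ioc (k * a - K) (k * a) := by
    ext x
    simp only [mem_image, mem_Ico, mem_Ioc]
    constructor
    · rintro ⟨y, hy, rfl⟩
      omega
    · exact fun hx => ⟨k * a - x, by omega, sub_sub_cancel _ _⟩
  have hinv : ((k * a - ·) ∘ (k * a - ·) : ℤ → ℤ) = id := funext fun x => sub_sub_cancel _ x
  rw [nsmul_image_const_sub, nsmul_eq_mul, image_sdiff _ _ sub_right_injective, image_image, hIco,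
    hinv, image_id]

theorem card_Icc_sdiff_of_Icc_subset (S : Finset ℤ) {n K : ℤ} (hK : 2 * K ≤ n)
    (hS : Icc K (n - K) ⊆ S) : #(Icc 0 n \ S) = #(Ico 0 K \ S) + #(Ioc (n - K) n \ S) := by
  rw [← card_union_of_disjoint]
  · congr 1
    ext x
    have := @hS x
    simp only [mem_sdiff, mem_union, mem_Icc, mem_Ico, mem_Ioc] at this ⊢
    grind
  · refine Disjoint.mono sdiff_subset sdiff_subset (disjoint_left.2 fun x hx hx' => ?_)
    rw [mem_Ico] at hx
    rw [mem_Ioc] at hx'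
    omega

theorem card_eq_sub_card_Icc_sdiff {S : Finset ℤ} {n : ℤ} (hn : 0 ≤ n) (hS : S ⊆ Icc 0 n) :
    (#S : ℤ) = n + 1 - #(Icc 0 n \ S) := by
  have := card_sdiff_add_card_eq_card hS
  rw [Int.card_Icc] at this
  omega

end Int

theorem stmt_5 (A : Finset ℤ) (hne : A.Nonempty)
    (hpos : ∀ a ∈ A, 0 ≤ a) (h0 : (0 : ℤ) ∈ A)
    (hmax : 0 < A.max' hne) (hgcd : A.gcd id = 1) :
    ∃ N C : ℕ, ∀ k : ℕ, N ≤ k →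
      ((itSum k A).card : ℤ) = (k : ℤ) * A.max' hne + 1 - (C : ℤ) := by
  set a := A.max' hne
  set B := A.image (a - ·)
  have hA : A ⊆ Icc 0 a := fun x hx => mem_Icc.2 ⟨hpos x hx, le_max' A x hx⟩
  have h0B : 0 ∈ B := mem_image.2 ⟨a, max'_mem A hne, sub_self a⟩
  obtain ⟨K, hK⟩ := exists_Icc_subset_nsmul hpos h0 (max'_mem A hne) hmax hgcd
  obtain ⟨N₁, hN₁⟩ := exists_sdiff_nsmul_eq h0 (Ico 0 K)
  obtain ⟨N₂, hN₂⟩ := exists_sdiff_nsmul_eq h0B (Ico 0 K)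
  refine ⟨N₁ + N₂ + 2 * K.toNat, #(Ico 0 K \ N₁ • A) + #(Ico 0 K \ N₂ • B), fun k hk => ?_⟩
  have h2K : 2 * K ≤ k * a := by
    have : 2 * K ≤ k := by omega
    nlinarith
  have hkA : k • A ⊆ Icc 0 (k * a) := nsmul_eq_mul k a ▸ nsmul_subset_Icc hA k
  rw [itSum_eq_nsmul, card_eq_sub_card_Icc_sdiff (by positivity) hkA,
    card_Icc_sdiff_of_Icc_subset _ h2K (hK k), Ioc_sdiff_nsmul_eq_image,
    card_image_of_injective _ sub_right_injective, hN₁ k (by omega), hN₂ k (by omega), Nat.cast_add]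
end

section
/- For every k ≥ 1 there exists a finite set A ⊂ ℕ such that for all 1 ≤ c ≤ k, |cA + cA| > |cA - cA|; i.e., k-generational sum-dominant sets exist for every k. -/
/-!
Take `A = X ∪ [h, t - h] ∪ {t}` with `X = {0, d, d + 1}`, `d = 2k + 2`, `h = d²` and `t = 3h`.
For `1 ≤ c ≤ 2k` the sumset `cA` has the same shape `cX ∪ [h, ct - h] ∪ {ct}`, where
`cX = {s d + j : j ≤ s ≤ c}` is a triangle of `(c + 1)(c + 2)/2` points below `h`.
So `|2cA| = |2cX| + (2ct - 2h + 1) + 1`, while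
`cA - cA ⊆ (cX - ct) ∪ [h - ct, ct - h] ∪ (ct - cX)` has at most `2|cX| + (2ct - 2h + 1)` elements.
As `|2cX| = (2c + 1)(c + 1) ≥ (c + 1)(c + 2) = 2|cX|`, the sums win: the lower fringe grows
quadratically in `c`, while the upper one stays a single point.
-/

open Finset Pointwise

lemma itSum_one (A : Finset ℤ) : itSum 1 A = A := add_zero A

noncomputable def fringed (S : Finset ℤ) (h t : ℤ) : Finset ℤ := S ∪ Icc h (t - h) ∪ {t}

section Fringed

variable {S T : Finset ℤ} {h s t x : ℤ}

lemma mem_fringed : x ∈ fringed S h t ↔ x ∈ S ∨ (h ≤ x ∧ x ≤ t - h) ∨ x = t := by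
  simp only [fringed, mem_union, mem_Icc, mem_singleton, or_assoc]

lemma fringed_add_fringed (hS : S ⊆ Ico 0 h) (hT : T ⊆ Ico 0 h) (hS0 : 0 ∈ S)
    (hs : 3 * h ≤ s) (ht : 3 * h ≤ t) :
    fringed S h s + fringed T h t = fringed (S + T) h (s + t) := by
  have hh : 0 < h := (mem_Ico.1 (hS hS0)).2
  ext x
  rw [mem_add]
  simp only [mem_fringed]
  constructor
  · rintro ⟨a, ha, b, hb, rfl⟩
    rcases ha with ha | ha | rfl <;> rcases hb with hb | hb | rfl
    · exact .inl (add_mem_add ha hb)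
    all_goals first
      | (have := mem_Ico.1 (hS ‹a ∈ S›); omega)
      | (have := mem_Ico.1 (hT ‹b ∈ T›); omega)
      | omega
  · rintro (hx | hx | rfl)
    · obtain ⟨a, ha, b, hb, rfl⟩ := mem_add.1 hx
      exact ⟨a, .inl ha, b, .inl hb, rfl⟩
    · by_cases hxt : x ≤ t - h
      · exact ⟨0, .inl hS0, x, .inr (.inl ⟨hx.1, hxt⟩), zero_add x⟩
      by_cases hxs : x ≤ s
      · exact ⟨x - h, .inr (.inl ⟨by omega, by omega⟩), h, .inr (.inl ⟨le_rfl, by omega⟩), by ring⟩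
      by_cases hxsh : x < s + h
      · exact ⟨s - h, .inr (.inl ⟨by omega, le_rfl⟩), x - s + h, .inr (.inl ⟨by omega, by omega⟩),
          by ring⟩
      · exact ⟨s, .inr (.inr rfl), x - s, .inr (.inl ⟨by omega, by omega⟩), by ring⟩
    · exact ⟨s, .inr (.inr rfl), t, .inr (.inr rfl), rfl⟩

lemma card_fringed (hS : S ⊆ Ico 0 h) (hh : 0 < h) (ht : 2 * h ≤ t) :
    (#(fringed S h t) : ℤ) = #S + (t - 2 * h + 1) + 1 := by
  have hSI : Disjoint S (Icc h (t - h)) :=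
    disjoint_left.2 fun x hxS hxI => by
      have := mem_Ico.1 (hS hxS); have := mem_Icc.1 hxI; omega
  have hSIt : Disjoint (S ∪ Icc h (t - h)) {t} :=
    disjoint_singleton_right.2 fun htm => by
      rcases mem_union.1 htm with htS | htI
      · have := mem_Ico.1 (hS htS); omega
      · have := mem_Icc.1 htI; omega
  rw [fringed, card_union_of_disjoint hSIt, card_union_of_disjoint hSI, Int.card_Icc,
    card_singleton]
  push_cast
  rw [Int.toNat_of_nonneg (by omega)]
  ring

lemma fringed_sub_fringed_subset (hS : S ⊆ Ico 0 h) (hh : 0 < h) (ht : 3 * h ≤ t) :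
    fringed S h t - fringed S h t ⊆ (S - {t}) ∪ Icc (h - t) (t - h) ∪ ({t} - S) := by
  rintro x hx
  obtain ⟨a, ha, b, hb, rfl⟩ := mem_sub.1 hx
  simp only [mem_union, mem_Icc]
  rw [mem_fringed] at ha hb
  rcases ha with ha | ha | rfl <;> rcases hb with hb | hb | rfl
  · have := mem_Ico.1 (hS ha); have := mem_Ico.1 (hS hb); omega
  · have := mem_Ico.1 (hS ha); omega
  · exact .inl (.inl (sub_mem_sub ha (mem_singleton_self _)))
  · have := mem_Ico.1 (hS hb); omega
  · omega
  · omega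
  · exact .inr (sub_mem_sub (mem_singleton_self _) hb)
  · omega
  · omega

lemma card_fringed_sub_fringed_le (hS : S ⊆ Ico 0 h) (hh : 0 < h) (ht : 3 * h ≤ t) :
    (#(fringed S h t - fringed S h t) : ℤ) ≤ 2 * #S + (2 * t - 2 * h + 1) := by
  have hsub := card_le_card (fringed_sub_fringed_subset hS hh ht)
  have hunion := card_union_le ((S - {t}) ∪ Icc (h - t) (t - h)) ({t} - S)
  have hunion' := card_union_le (S - {t}) (Icc (h - t) (t - h))
  have hleft : #(S - {t}) ≤ #S := by simpa using card_sub_le (s := S) (t := {t})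
  have hright : #({t} - S) ≤ #S := by simpa using card_sub_le (s := {t}) (t := S)
  rw [Int.card_Icc] at hunion'
  omega

lemma card_fringed_sub_fringed_lt (hS : S ⊆ Ico 0 h) (hT : T ⊆ Ico 0 h) (hh : 0 < h)
    (ht : 3 * h ≤ t) (hST : 2 * #S ≤ #T) :
    #(fringed S h t - fringed S h t) < #(fringed T h (2 * t)) := by
  have hsub := card_fringed_sub_fringed_le hS hh ht
  have hsum := card_fringed hT hh (t := 2 * t) (by omega)
  omega

lemma itSum_fringed {c : ℕ} (hS0 : 0 ∈ S) (hS : ∀ j ≤ c, itSum j S ⊆ Ico 0 h) (ht : 3 * h ≤ t)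
    (hc : 1 ≤ c) : itSum c (fringed S h t) = fringed (itSum c S) h (c * t) := by
  induction c, hc using Nat.le_induction with
  | base => simp [itSum_one]
  | succ c hc ih =>
    have hS1 : S ⊆ Ico 0 h := itSum_one S ▸ hS 1 (by omega)
    have hh : 0 < h := (mem_Ico.1 (hS1 hS0)).2
    rw [itSum, ih fun j hj => hS j (by omega), fringed_add_fringed hS1 (hS c (by omega)) hS0 ht
      (by nlinarith)]
    rw [show ((c + 1 : ℕ) : ℤ) * t = t + c * t by push_cast; ring]
    rfl

lemma fringed_subset_Icc (hS : S ⊆ Ico 0 h) (hh : 0 < h) (ht : 2 * h ≤ t) :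
    fringed S h t ⊆ Icc 0 t := by
  intro x hx
  rw [mem_Icc]
  rcases mem_fringed.1 hx with hx | hx | rfl
  · have := mem_Ico.1 (hS hx); omega
  · omega
  · omega

end Fringed

def triangle (d c : ℕ) : Finset ℤ :=
  ((range (c + 1)).sigma fun s => range (s + 1)).image fun p => ((p.1 * d + p.2 : ℕ) : ℤ)

section Triangle

variable {d c : ℕ} {x : ℤ}

lemma mem_triangle :
    x ∈ triangle d c ↔ ∃ s j : ℕ, s ≤ c ∧ j ≤ s ∧ ((s * d + j : ℕ) : ℤ) = x := by
  simp only [triangle, mem_image, mem_sigma, mem_range, Nat.lt_succ_iff, Sigma.exists]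
  aesop

lemma triangle_zero (d : ℕ) : triangle d 0 = {0} := by
  ext x
  simp only [mem_triangle, mem_singleton]
  constructor
  · rintro ⟨s, j, hs, hj, rfl⟩
    obtain rfl : s = 0 := by omega
    obtain rfl : j = 0 := by omega
    simp
  · rintro rfl
    exact ⟨0, 0, le_rfl, le_rfl, by simp⟩

lemma triple_add_triangle (d c : ℕ) :
    {0, (d : ℤ), (d : ℤ) + 1} + triangle d c = triangle d (c + 1) := by
  ext x
  simp only [mem_add, mem_insert, mem_singleton, mem_triangle]
  constructor
  · rintro ⟨e, he, _, ⟨s, j, hs, hj, rfl⟩, rfl⟩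
    rcases he with rfl | rfl | rfl
    · exact ⟨s, j, by omega, hj, by ring⟩
    · exact ⟨s + 1, j, by omega, by omega, by push_cast; ring⟩
    · exact ⟨s + 1, j + 1, by omega, by omega, by push_cast; ring⟩
  · rintro ⟨s, j, hs, hj, rfl⟩
    by_cases hsc : s ≤ c
    · exact ⟨0, .inl rfl, _, ⟨s, j, hsc, hj, rfl⟩, zero_add _⟩
    obtain rfl : s = c + 1 := by omega
    by_cases hjc : j ≤ c
    · exact ⟨d, .inr (.inl rfl), _, ⟨c, j, le_rfl, hjc, rfl⟩, by push_cast; ring⟩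
    obtain rfl : j = c + 1 := by omega
    exact ⟨d + 1, .inr (.inr rfl), _, ⟨c, c, le_rfl, le_rfl, rfl⟩, by push_cast; ring⟩

lemma itSum_triple (d : ℕ) : ∀ c, itSum c {0, (d : ℤ), (d : ℤ) + 1} = triangle d c
  | 0 => (triangle_zero d).symm
  | c + 1 => by rw [itSum, itSum_triple d c, triple_add_triangle]

lemma triangle_subset_Ico (hc : c < d) : triangle d c ⊆ Ico 0 ((d : ℤ) ^ 2) := by
  intro x hx
  obtain ⟨s, j, hs, hj, rfl⟩ := mem_triangle.1 hx
  rw [mem_Ico]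
  constructor
  · positivity
  · have : s * d + j < d ^ 2 := by nlinarith
    exact_mod_cast this

lemma two_mul_card_triangle (hc : c < d) : 2 * #(triangle d c) = (c + 1) * (c + 2) := by
  rw [triangle, card_image_of_injOn, card_sigma]
  · simp only [card_range]
    have := sum_range_id_mul_two (c + 2)
    rw [sum_range_succ', add_zero, show c + 2 - 1 = c + 1 by omega] at this
    linarith
  · rintro ⟨s₁, j₁⟩ h₁ ⟨s₂, j₂⟩ h₂ he
    simp only [coe_sigma, Set.mem_sigma_iff, coe_range, Set.mem_Iio] at h₁ h₂
    have he' : s₁ * d + j₁ = s₂ * d + j₂ := Int.ofNat_inj.1 he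
    have hs : s₁ = s₂ := by
      have := congrArg (· / d) he'
      rwa [Nat.mul_comm, Nat.mul_add_div (by omega), Nat.mul_comm, Nat.mul_add_div (by omega),
        Nat.div_eq_of_lt (by omega), Nat.div_eq_of_lt (by omega)] at this
    subst hs
    obtain rfl : j₁ = j₂ := by omega
    rfl

lemma two_mul_card_triangle_le (hc : 1 ≤ c) (hcd : 2 * c < d) :
    2 * #(triangle d c) ≤ #(triangle d (2 * c)) := by
  have h₁ := two_mul_card_triangle (d := d) (c := c) (by omega)
  have h₂ := two_mul_card_triangle hcd
  nlinarith

end Triangle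

theorem stmt_15_general (k : ℕ) :
    ∃ A : Finset ℤ, A.Nonempty ∧ (∀ a ∈ A, 0 ≤ a) ∧
      ∀ c : ℕ, 1 ≤ c → c ≤ k →
        (itSum (2 * c) A).card > (gDiff c c A).card := by
  set d := 2 * k + 2
  set h : ℤ := (d : ℤ) ^ 2
  set X : Finset ℤ := {0, (d : ℤ), (d : ℤ) + 1}
  have hh : 0 < h := by positivity
  have hX0 : 0 ∈ X := mem_insert_self _ _
  have hX : ∀ j < d, itSum j X ⊆ Ico 0 h := fun j hj => itSum_triple d j ▸ triangle_subset_Ico hj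
  have hA : ∀ c, 1 ≤ c → c < d →
      itSum c (fringed X h (3 * h)) = fringed (triangle d c) h (c * (3 * h)) :=
    fun c hc hcd => itSum_triple d c ▸ itSum_fringed hX0 (fun j hj => hX j (by omega)) le_rfl hc
  refine ⟨fringed X h (3 * h), ⟨0, mem_fringed.2 (.inl hX0)⟩,
    fun a ha => (mem_Icc.1 (fringed_subset_Icc (itSum_one X ▸ hX 1 (by omega)) hh (by omega) ha)).1,
    fun c hc hck => ?_⟩
  rw [gDiff, hA c hc (by omega), hA (2 * c) (by omega) (by omega),
    show ((2 * c : ℕ) : ℤ) * (3 * h) = 2 * (c * (3 * h)) by push_cast; ring]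
  exact card_fringed_sub_fringed_lt (triangle_subset_Ico (by omega))
    (triangle_subset_Ico (by omega)) hh (by nlinarith) (two_mul_card_triangle_le hc (by omega))

theorem stmt_15 (k : ℕ) (hk : 1 ≤ k) :
    ∃ A : Finset ℤ, A.Nonempty ∧ (∀ a ∈ A, 0 ≤ a) ∧
      ∀ c : ℕ, 1 ≤ c → c ≤ k →
        (itSum (2 * c) A).card > (gDiff c c A).card :=
  stmt_15_general k
end
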